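/- Let ℐ be a proper ideal on ℕ containing all finite sets, and suppose that for every x ∈ [ℕ]^ω there exists A ∈ ℐ such that the set {i ∈ ℕ : [x(i), x(i+1)) ⊆ A} is infinite, where x(i) denotes the i-th element of x in increasing order. Define E(ℐ) = {x ∈ [ℕ]^ω : ⋃_{i∈ℕ} [x(2i), x(2i+1)) ∈ ℐ}. Then E(ℐ) does not have the Ramsey property: for every x ∈ [ℕ]^ω there exist y₁, y₂ ∈ [x]^ω with y₁ ∈ E(ℐ) and y₂ ∉ E(ℐ). -/
import Mathlib


open Set

/-- A proper ideal on `ℕ`: contains `∅`, not `ℕ`, closed under subsets and finite unions. -/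
def IsProperIdeal (I : Set (Set ℕ)) : Prop :=
  ∅ ∈ I ∧ (Set.univ : Set ℕ) ∉ I ∧
  (∀ A ∈ I, ∀ B : Set ℕ, B ⊆ A → B ∈ I) ∧
  (∀ A ∈ I, ∀ B ∈ I, A ∪ B ∈ I)

/-- A proper filter on `ℕ`: the pointwise complements form a proper ideal. -/
def IsProperFilter (F : Set (Set ℕ)) : Prop :=
  IsProperIdeal (compl '' F)
/-- The `k`-th element of `A ⊆ ℕ` in increasing order. -/
noncomputable def nthElem (A : Set ℕ) (k : ℕ) : ℕ := Nat.nth (· ∈ A) k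
/-- A set `X ⊆ [ℕ]^ω` has the Ramsey property: there is an infinite `H ⊆ ℕ` with
`[H]^ω ⊆ X` or `[H]^ω ∩ X = ∅`. -/
def RamseyProp (X : Set (Set ℕ)) : Prop :=
  ∃ H : Set ℕ, H.Infinite ∧
    ((∀ y : Set ℕ, y.Infinite → y ⊆ H → y ∈ X) ∨
     (∀ y : Set ℕ, y.Infinite → y ⊆ H → y ∉ X))

/-- The set `E(ℐ) = {x ∈ [ℕ]^ω : ⋃_i [x(2i), x(2i+1)) ∈ ℐ}`. -/
noncomputable def EIdeal (I : Set (Set ℕ)) : Set (Set ℕ) :=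
  {x | x.Infinite ∧ (⋃ i : ℕ, Set.Ico (nthElem x (2 * i)) (nthElem x (2 * i + 1))) ∈ I}

lemma nth_range_strictMono {f : ℕ → ℕ} (hf : StrictMono f) (k : ℕ) :
    Nat.nth (· ∈ Set.range f) k = f k := by
  induction k using Nat.strong_induction_on with
  | _ k ih =>
    rw [Nat.nth_eq_sInf]
    have hmem : f k ∈ {x | (x ∈ Set.range f) ∧ ∀ j < k, Nat.nth (· ∈ Set.range f) j < x} :=
      ⟨⟨k, rfl⟩, fun j hj => by rw [ih j hj]; exact hf hj⟩
    apply le_antisymm (Nat.sInf_le hmem)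
    apply le_csInf ⟨f k, hmem⟩
    rintro b ⟨⟨m, rfl⟩, hb⟩
    rcases Nat.eq_zero_or_pos k with rfl | hk
    · exact hf.monotone (Nat.zero_le m)
    · have h1 := hb (k - 1) (by omega)
      rw [ih (k - 1) (by omega)] at h1
      have hkm : k ≤ m := by
        by_contra hlt
        exact absurd h1 (not_lt.2 (hf.monotone (by omega)))
      exact hf.monotone hkm

lemma nthElem_range {f : ℕ → ℕ} (hf : StrictMono f) (k : ℕ) :
    nthElem (Set.range f) k = f k := nth_range_strictMono hf k

theorem EIdeal_not_ramsey (I : Set (Set ℕ)) (hI : IsProperIdeal I)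
    (hfin : ∀ A : Set ℕ, A.Finite → A ∈ I)
    (hcov : ∀ x : Set ℕ, x.Infinite → ∃ A ∈ I,
      {i : ℕ | Set.Ico (nthElem x i) (nthElem x (i + 1)) ⊆ A}.Infinite) :
    ¬ RamseyProp (EIdeal I) ∧
    ∀ x : Set ℕ, x.Infinite →
      ∃ y₁ y₂ : Set ℕ,
        (y₁.Infinite ∧ y₁ ⊆ x ∧ y₁ ∈ EIdeal I) ∧
        (y₂.Infinite ∧ y₂ ⊆ x ∧ y₂ ∉ EIdeal I) := by
  obtain ⟨hEmpty, huniv, hsub, hun⟩ := hI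
  have key : ∀ x : Set ℕ, x.Infinite →
      ∃ y₁ y₂ : Set ℕ,
        (y₁.Infinite ∧ y₁ ⊆ x ∧ y₁ ∈ EIdeal I) ∧
        (y₂.Infinite ∧ y₂ ⊆ x ∧ y₂ ∉ EIdeal I) := by
    intro x hx
    obtain ⟨A, hA, hS⟩ := hcov x hx
    set S := {i : ℕ | Set.Ico (nthElem x i) (nthElem x (i + 1)) ⊆ A} with hSdef
    have hxinf : {n | n ∈ x}.Infinite := hx
    have hSinf : {n | n ∈ S}.Infinite := hS
    have hxs : StrictMono (nthElem x) := Nat.nth_strictMono hxinf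
    have hSs : StrictMono (nthElem S) := Nat.nth_strictMono hSinf
    -- the index sequence
    set g : ℕ → ℕ := fun n => nthElem S (2 * (n / 2)) + n % 2 with hgdef
    have hg : StrictMono g := by
      apply strictMono_nat_of_lt_succ
      intro n
      obtain ⟨k, rfl | rfl⟩ := Nat.even_or_odd' n
      · have e1 : 2 * (2 * k / 2) = 2 * k := by omega
        have e2 : 2 * ((2 * k + 1) / 2) = 2 * k := by omega
        simp only [hgdef, e1, e2]
        omega
      · have e1 : 2 * ((2 * k + 1) / 2) = 2 * k := by omega
        have e2 : 2 * ((2 * k + 1 + 1) / 2) = 2 * (k + 1) := by omega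
        simp only [hgdef, e1, e2]
        have h1 : nthElem S (2 * k) < nthElem S (2 * k + 1) := hSs (by omega)
        have h2 : nthElem S (2 * k + 1) < nthElem S (2 * (k + 1)) := hSs (by omega)
        omega
    set f : ℕ → ℕ := fun n => nthElem x (g n) with hfdef
    have hf : StrictMono f := fun a b hab => hxs (hg hab)
    have hfx : ∀ n, f n ∈ x := fun n => Nat.nth_mem_of_infinite hxinf (g n)
    have hg2k : ∀ k, g (2 * k) = nthElem S (2 * k) := by
      intro k
      have e1 : 2 * (2 * k / 2) = 2 * k := by omega
      have e2 : (2 * k) % 2 = 0 := by omega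
      simp only [hgdef, e1, e2]; omega
    have hg2k1 : ∀ k, g (2 * k + 1) = nthElem S (2 * k) + 1 := by
      intro k
      have e1 : 2 * ((2 * k + 1) / 2) = 2 * k := by omega
      have e2 : (2 * k + 1) % 2 = 1 := by omega
      simp only [hgdef, e1, e2]
    -- the even-gap union of f is inside A
    have hU1 : (⋃ i : ℕ, Set.Ico (f (2 * i)) (f (2 * i + 1))) ∈ I := by
      apply hsub A hA
      apply Set.iUnion_subset
      intro i
      have hiS : nthElem S (2 * i) ∈ S := Nat.nth_mem_of_infinite hSinf (2 * i)
      simp only [hfdef, hg2k, hg2k1]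
      exact hiS
    refine ⟨Set.range f, Set.range (fun n => f (n + 1)), ⟨?_, ?_, ?_⟩, ⟨?_, ?_, ?_⟩⟩
    · exact Set.infinite_range_of_injective hf.injective
    · rintro _ ⟨n, rfl⟩; exact hfx n
    · refine ⟨Set.infinite_range_of_injective hf.injective, ?_⟩
      have : (⋃ i : ℕ, Set.Ico (nthElem (Set.range f) (2 * i)) (nthElem (Set.range f) (2 * i + 1)))
          = ⋃ i : ℕ, Set.Ico (f (2 * i)) (f (2 * i + 1)) := by
        simp only [nthElem_range hf]
      rw [this]
      exact hU1
    · exact Set.infinite_range_of_injective (fun a b hab => hf.injective hab |> Nat.succ_injective)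
    · rintro _ ⟨n, rfl⟩; exact hfx (n + 1)
    · rintro ⟨-, hU2⟩
      have hf1 : StrictMono (fun n => f (n + 1)) := fun a b hab => hf (by omega)
      have hU2' : (⋃ i : ℕ, Set.Ico (f (2 * i + 1)) (f (2 * i + 2))) ∈ I := by
        have : (⋃ i : ℕ, Set.Ico (nthElem (Set.range fun n => f (n + 1)) (2 * i))
            (nthElem (Set.range fun n => f (n + 1)) (2 * i + 1)))
            = ⋃ i : ℕ, Set.Ico (f (2 * i + 1)) (f (2 * i + 2)) := by
          simp only [nthElem_range hf1]
        rwa [this] at hU2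
      -- the three pieces cover ℕ
      have hcover : (Set.Ico 0 (f 0) ∪ (⋃ i : ℕ, Set.Ico (f (2 * i)) (f (2 * i + 1)))) ∪
          (⋃ i : ℕ, Set.Ico (f (2 * i + 1)) (f (2 * i + 2))) = Set.univ := by
        apply Set.eq_univ_of_forall
        intro n
        by_cases hn0 : n < f 0
        · exact Or.inl (Or.inl ⟨Nat.zero_le n, hn0⟩)
        · push_neg at hn0
          have hex : ∃ m, n < f m := ⟨n + 1, lt_of_le_of_lt (hf.le_apply) (hf (by omega))⟩
          set m := Nat.find hex with hmdef
          have hm : n < f m := Nat.find_spec hex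
          have hmpos : 0 < m := by
            rcases Nat.eq_zero_or_pos m with h | h
            · rw [h] at hm; omega
            · exact h
          have hml : f (m - 1) ≤ n := by
            have := Nat.find_min hex (show m - 1 < m by omega)
            omega
          obtain ⟨k, hk | hk⟩ := Nat.even_or_odd' (m - 1)
          · left; right
            refine Set.mem_iUnion.2 ⟨k, hml.trans_eq' (by rw [hk]), ?_⟩
            have : m = 2 * k + 1 := by omega
            rwa [this] at hm
          · right
            refine Set.mem_iUnion.2 ⟨k, hml.trans_eq' (by rw [hk]), ?_⟩
            have : m = 2 * k + 2 := by omega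
            rwa [this] at hm
      apply huniv
      rw [← hcover]
      exact hun _ (hun _ (hfin _ (Set.finite_Ico 0 (f 0))) _ hU1) _ hU2'
  refine ⟨?_, key⟩
  rintro ⟨H, hH, hcase⟩
  obtain ⟨y₁, y₂, ⟨h1i, h1s, h1E⟩, ⟨h2i, h2s, h2E⟩⟩ := key H hH
  rcases hcase with h | h
  · exact h2E (h y₂ h2i h2s)
  · exact h y₁ h1i h1s h1E
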